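/- Let 0 < γ < 2, ρ > 0, s > 0, A_i ∈ ℝ^{m×n_i}, and let P_i ∈ ℝ^{n_i×n_i} be symmetric positive semi-definite for i = 1,…,N. Suppose there exist ξ_i > 0 with ∑_{i=1}^N ξ_i < 2 − γ such that for each i the matrix ρA_iᵀA_i + P_i − 8s(ρA_iᵀA_i + P_i)ᵀ(ρA_iᵀA_i + P_i) − (ρ/ξ_i)A_iᵀA_i is positive definite. Then for any vectors x_i, x_i⁺ ∈ ℝ^{n_i} (i = 1,…,N) and λ, λ⁺ ∈ ℝ^m: (1/2)∑_{i=1}^N ‖x_i⁺ − x_i‖²_{ρA_iᵀA_i+P_i} − 4s∑_{i=1}^N ‖(ρA_iᵀA_i + P_i)(x_i⁺ − x_i)‖² + ((2−γ)/(2γ²ρ))‖λ⁺ − λ‖² + (1/γ)⟨λ − λ⁺, ∑_{i=1}^N A_i(x_i − x_i⁺)⟩ ≥ 0. -/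

import Mathlib

open Matrix Finset RealInnerProductSpace

/-- Matrix-vector multiplication `A x` as a map between Euclidean spaces. -/
noncomputable def mv {a b : ℕ} (A : Matrix (Fin a) (Fin b) ℝ)
    (x : EuclideanSpace ℝ (Fin b)) : EuclideanSpace ℝ (Fin a) :=
  Matrix.toEuclideanLin A x

/-- Quadratic form `xᵀ M x`. -/
noncomputable def qf {a : ℕ} (M : Matrix (Fin a) (Fin a) ℝ)
    (x : EuclideanSpace ℝ (Fin a)) : ℝ := ⟪x, mv M x⟫

/-- Operator norm of a matrix, viewed as a linear map between Euclidean spaces. -/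
noncomputable def opN {a b : ℕ} (A : Matrix (Fin a) (Fin b) ℝ) : ℝ :=
  ‖(LinearMap.toContinuousLinearMap (Matrix.toEuclideanLin A))‖

/-!
Write `M_i = ρ A_iᵀA_i + P_i`, `d_i = x_i⁺ - x_i` and `μ = λ⁺ - λ`. For each block, the
positive-definiteness hypothesis gives `½‖d_i‖²_{M_i} - 4s‖M_i d_i‖² ≥ (ρ / 2ξ_i)‖A_i d_i‖²`, and
Young's inequality with weight `ξ_i / (γρ)` absorbs the cross term `(1/γ)⟨μ, A_i d_i⟩` at the cost
of `(ξ_i / 2γ²ρ)‖μ‖²`. Summing over `i`, the total cost is covered by the `‖μ‖²` term of the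
statement because `∑ ξ_i < 2 - γ`.
-/

theorem mv_mul {a b c : ℕ} (A : Matrix (Fin a) (Fin b) ℝ) (B : Matrix (Fin b) (Fin c) ℝ)
    (v : EuclideanSpace ℝ (Fin c)) : mv (A * B) v = mv A (mv B v) := by
  simp [mv]

theorem inner_mv_transpose {a b : ℕ} (A : Matrix (Fin a) (Fin b) ℝ)
    (u : EuclideanSpace ℝ (Fin b)) (v : EuclideanSpace ℝ (Fin a)) :
    ⟪u, mv Aᵀ v⟫ = ⟪mv A u, v⟫ := by
  rw [mv, ← conjTranspose_eq_transpose_of_trivial, toEuclideanLin_conjTranspose_eq_adjoint,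
    LinearMap.adjoint_inner_right]
  rfl

theorem qf_transpose_mul_self {a b : ℕ} (A : Matrix (Fin a) (Fin b) ℝ)
    (v : EuclideanSpace ℝ (Fin b)) : qf (Aᵀ * A) v = ‖mv A v‖ ^ 2 := by
  rw [qf, mv_mul, inner_mv_transpose, real_inner_self_eq_norm_sq]

theorem qf_sub {a : ℕ} (M M' : Matrix (Fin a) (Fin a) ℝ) (v : EuclideanSpace ℝ (Fin a)) :
    qf (M - M') v = qf M v - qf M' v := by
  simp only [qf, mv, map_sub, LinearMap.sub_apply, inner_sub_right]

theorem qf_smul {a : ℕ} (c : ℝ) (M : Matrix (Fin a) (Fin a) ℝ) (v : EuclideanSpace ℝ (Fin a)) :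
    qf (c • M) v = c * qf M v := by
  simp only [qf, mv, map_smul, LinearMap.smul_apply, inner_smul_right]

theorem Matrix.PosSemidef.qf_nonneg {a : ℕ} {M : Matrix (Fin a) (Fin a) ℝ} (hM : M.PosSemidef)
    (v : EuclideanSpace ℝ (Fin a)) : 0 ≤ qf M v :=
  (isPositive_toEuclideanLin_iff.mpr hM).inner_nonneg_right v

theorem neg_inner_le_young {E : Type*} [NormedAddCommGroup E] [InnerProductSpace ℝ E]
    (u v : E) {t : ℝ} (ht : 0 < t) : -⟪u, v⟫ ≤ t / 2 * ‖u‖ ^ 2 + ‖v‖ ^ 2 / (2 * t) :=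
  calc -⟪u, v⟫ ≤ ‖u‖ * ‖v‖ := (neg_le_abs _).trans (abs_real_inner_le_norm u v)
    _ = t / 2 * ‖u‖ ^ 2 + ‖v‖ ^ 2 / (2 * t) - (t * ‖u‖ - ‖v‖) ^ 2 / (2 * t) := by
      field_simp; ring
    _ ≤ t / 2 * ‖u‖ ^ 2 + ‖v‖ ^ 2 / (2 * t) := sub_le_self _ (by positivity)

theorem mul_norm_sq_add_mul_norm_sq_le_qf {a b : ℕ} {M : Matrix (Fin a) (Fin a) ℝ}
    {A : Matrix (Fin b) (Fin a) ℝ} {c κ : ℝ} (h : (M - c • (Mᵀ * M) - κ • (Aᵀ * A)).PosSemidef)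
    (v : EuclideanSpace ℝ (Fin a)) : c * ‖mv M v‖ ^ 2 + κ * ‖mv A v‖ ^ 2 ≤ qf M v := by
  have := h.qf_nonneg v
  rw [qf_sub, qf_sub, qf_smul, qf_smul, qf_transpose_mul_self, qf_transpose_mul_self] at this
  linarith

theorem block_residual_lower_bound {a b : ℕ} {M : Matrix (Fin a) (Fin a) ℝ}
    {A : Matrix (Fin b) (Fin a) ℝ} {γ ρ s ξ : ℝ} (hγ : 0 < γ) (hρ : 0 < ρ) (hξ : 0 < ξ)
    (h : (M - (8 * s) • (Mᵀ * M) - (ρ / ξ) • (Aᵀ * A)).PosSemidef)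
    (v : EuclideanSpace ℝ (Fin a)) (μ : EuclideanSpace ℝ (Fin b)) :
    -(ξ / (2 * γ ^ 2 * ρ) * ‖μ‖ ^ 2)
      ≤ 1 / 2 * qf M v - 4 * s * ‖mv M v‖ ^ 2 + 1 / γ * ⟪μ, mv A v⟫ := by
  have hM := mul_norm_sq_add_mul_norm_sq_le_qf h v
  have hμ := neg_inner_le_young μ (mv A v) (t := ξ / (γ * ρ)) (by positivity)
  have hscale : 1 / γ * (ξ / (γ * ρ) / 2 * ‖μ‖ ^ 2 + ‖mv A v‖ ^ 2 / (2 * (ξ / (γ * ρ))))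
      = ξ / (2 * γ ^ 2 * ρ) * ‖μ‖ ^ 2 + ρ / ξ / 2 * ‖mv A v‖ ^ 2 := by
    field_simp
  have hcross := mul_le_mul_of_nonneg_left hμ (one_div_pos.mpr hγ).le
  rw [hscale] at hcross
  linarith

theorem inner_sub_sum_mv_sub_eq_sum_inner {N m : ℕ} {n : Fin N → ℕ}
    (A : (i : Fin N) → Matrix (Fin m) (Fin (n i)) ℝ)
    (x xp : (i : Fin N) → EuclideanSpace ℝ (Fin (n i))) (lam lamp : EuclideanSpace ℝ (Fin m)) :
    ⟪lam - lamp, ∑ i, mv (A i) (x i - xp i)⟫ = ∑ i, ⟪lamp - lam, mv (A i) (xp i - x i)⟫ := by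
  rw [inner_sum]
  refine Finset.sum_congr rfl fun i _ => ?_
  rw [← neg_sub lamp lam, ← neg_sub (xp i) (x i), mv, map_neg, inner_neg_neg]
  rfl

theorem stmt10_general {N m : ℕ} (n : Fin N → ℕ)
    (γ ρ s : ℝ) (hγ0 : 0 < γ) (hρ : 0 < ρ)
    (A : (i : Fin N) → Matrix (Fin m) (Fin (n i)) ℝ)
    (P : (i : Fin N) → Matrix (Fin (n i)) (Fin (n i)) ℝ)
    (ξ : Fin N → ℝ) (hξ : ∀ i, 0 < ξ i) (hξsum : ∑ i, ξ i < 2 - γ)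
    (hmat : ∀ i, (ρ • ((A i)ᵀ * A i) + P i
        - (8 * s) • ((ρ • ((A i)ᵀ * A i) + P i)ᵀ * (ρ • ((A i)ᵀ * A i) + P i))
        - (ρ / ξ i) • ((A i)ᵀ * A i)).PosDef) :
    ∀ (x xp : (i : Fin N) → EuclideanSpace ℝ (Fin (n i)))
      (lam lamp : EuclideanSpace ℝ (Fin m)),
      (1 / 2) * ∑ i, qf (ρ • ((A i)ᵀ * A i) + P i) (xp i - x i)
          - 4 * s * ∑ i, ‖mv (ρ • ((A i)ᵀ * A i) + P i) (xp i - x i)‖ ^ 2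
          + ((2 - γ) / (2 * γ ^ 2 * ρ)) * ‖lamp - lam‖ ^ 2
          + (1 / γ) * ⟪lam - lamp, ∑ i, mv (A i) (x i - xp i)⟫ ≥ 0 := by
  intro x xp lam lamp
  have hblocks := Finset.sum_le_sum fun i (_ : i ∈ Finset.univ) =>
    block_residual_lower_bound hγ0 hρ (hξ i) (hmat i).posSemidef (xp i - x i) (lamp - lam)
  simp only [Finset.sum_add_distrib, Finset.sum_sub_distrib, Finset.sum_neg_distrib,
    ← Finset.mul_sum, ← Finset.sum_mul, ← Finset.sum_div] at hblocks
  have hslack : (∑ i, ξ i) / (2 * γ ^ 2 * ρ) * ‖lamp - lam‖ ^ 2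
      ≤ (2 - γ) / (2 * γ ^ 2 * ρ) * ‖lamp - lam‖ ^ 2 := by
    gcongr
  rw [inner_sub_sum_mv_sub_eq_sum_inner]
  linarith

/-- Lemma 3.6 — nonnegativity of the residual term `H_k - 4s ∑ ‖⋅‖²`. -/
theorem stmt10 {N m : ℕ} (n : Fin N → ℕ)
    (γ ρ s : ℝ) (hγ0 : 0 < γ) (hγ2 : γ < 2) (hρ : 0 < ρ) (hs : 0 < s)
    (A : (i : Fin N) → Matrix (Fin m) (Fin (n i)) ℝ)
    (P : (i : Fin N) → Matrix (Fin (n i)) (Fin (n i)) ℝ)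
    (hP : ∀ i, (P i).PosSemidef)
    (ξ : Fin N → ℝ) (hξ : ∀ i, 0 < ξ i) (hξsum : ∑ i, ξ i < 2 - γ)
    (hmat : ∀ i, (ρ • ((A i)ᵀ * A i) + P i
        - (8 * s) • ((ρ • ((A i)ᵀ * A i) + P i)ᵀ * (ρ • ((A i)ᵀ * A i) + P i))
        - (ρ / ξ i) • ((A i)ᵀ * A i)).PosDef) :
    ∀ (x xp : (i : Fin N) → EuclideanSpace ℝ (Fin (n i)))
      (lam lamp : EuclideanSpace ℝ (Fin m)),
      (1 / 2) * ∑ i, qf (ρ • ((A i)ᵀ * A i) + P i) (xp i - x i)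
          - 4 * s * ∑ i, ‖mv (ρ • ((A i)ᵀ * A i) + P i) (xp i - x i)‖ ^ 2
          + ((2 - γ) / (2 * γ ^ 2 * ρ)) * ‖lamp - lam‖ ^ 2
          + (1 / γ) * ⟪lam - lamp, ∑ i, mv (A i) (x i - xp i)⟫ ≥ 0 :=
  stmt10_general n γ ρ s hγ0 hρ A P ξ hξ hξsum hmat
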